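/- arXiv:1509.07639 — 3 statements merged into one kernel-verified Lean document; each statement's English description precedes it below -/
import Mathlib

section
/- The set of permutations g of ℕ^k × [n] for which there exists a finite partition of ℕ^k × [n] into rays such that g restricted to each ray of the partition is a translation forms a subgroup of the symmetric group of ℕ^k × [n]: it contains the identity and is closed under composition and inversion. -/
open CategoryTheory

/-- Points of `ℕ^k × [n]`, where `ℕ^k` is modelled by `Fin k → ℕ` and `[n]` by `Fin n`. -/
abbrev HPt (k n : ℕ) := (Fin k → ℕ) × Fin n

/-- `X ⊆ ℕ^k` is an `r`-dimensional ray: there are a point `x ∈ ℕ^k` and an `r`-element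
subset `T ⊆ [k]` such that `X = {y | y j ≥ x j for j ∈ T, y j = x j for j ∉ T}`. -/
def IsRayOfDim (k r : ℕ) (X : Set (Fin k → ℕ)) : Prop :=
  ∃ (x : Fin k → ℕ) (T : Finset (Fin k)), T.card = r ∧
    X = {y | ∀ j, (j ∈ T → x j ≤ y j) ∧ (j ∉ T → y j = x j)}

/-- `X ⊆ ℕ^k` is a ray. -/
def IsRay (k : ℕ) (X : Set (Fin k → ℕ)) : Prop := ∃ r, IsRayOfDim k r X

/-- A ray in `ℕ^k × [n]`: a set `Y × {i}` with `Y` a ray in `ℕ^k` and `i ∈ [n]`. -/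
def IsRayIn (k n : ℕ) (X : Set (HPt k n)) : Prop :=
  ∃ (Y : Set (Fin k → ℕ)) (i : Fin n), IsRay k Y ∧ X = {p | p.1 ∈ Y ∧ p.2 = i}

/-- An `r`-dimensional ray in `ℕ^k × [n]`. -/
def IsRayInOfDim (k n r : ℕ) (X : Set (HPt k n)) : Prop :=
  ∃ (Y : Set (Fin k → ℕ)) (i : Fin n), IsRayOfDim k r Y ∧ X = {p | p.1 ∈ Y ∧ p.2 = i}

/-- The restriction of `f` to `A` is a translation: there are `d ∈ ℤ^k` and `d₀ ∈ ℤ`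
such that `f (x, i) = (x + d, i + d₀)` for all `(x, i) ∈ A`. -/
def IsTranslationOn (k n n' : ℕ) (f : HPt k n → HPt k n') (A : Set (HPt k n)) : Prop :=
  ∃ (d : Fin k → ℤ) (d₀ : ℤ), ∀ p ∈ A,
    (∀ j, ((f p).1 j : ℤ) = (p.1 j : ℤ) + d j) ∧ (((f p).2 : ℤ) = (p.2 : ℤ) + d₀)

/-- `P` is a finite partition of `A ⊆ ℕ^k × [n]` into rays. -/
def IsRayPartitionOf (k n : ℕ) (P : Set (Set (HPt k n))) (A : Set (HPt k n)) : Prop :=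
  P.Finite ∧ (∀ X ∈ P, IsRayIn k n X) ∧ ⋃₀ P = A ∧
    ∀ X ∈ P, ∀ Y ∈ P, X ≠ Y → Disjoint X Y

/-- `g` admits a finite partition of `ℕ^k × [n]` into rays on each of which it is a
translation. -/
def IsPiecewiseTranslation (k n : ℕ) (g : HPt k n → HPt k n) : Prop :=
  ∃ P, IsRayPartitionOf k n P Set.univ ∧ ∀ X ∈ P, IsTranslationOn k n n g X

/-!
A ray in `ℕ^k` is a product of coordinate factors, each a half-line `[a, ∞)` or a point, and
such factors stay factors (or become empty) under intersection and under preimage by an integer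
shift. So if `g` and `h` are translations on the pieces of ray partitions `P` and `Q`, the
nonempty sets `X ∩ h⁻¹(Y)` with `X ∈ Q`, `Y ∈ P` form a ray partition on whose pieces `g ∘ h` is
a translation; and the images `g(X)`, `X ∈ P`, form one for `g⁻¹`, because `g(X)` is the
preimage of `X` under the shift opposite to that of `g` on `X`.
-/

open Set

variable {k n n' n'' : ℕ}

def IsTranslate (d : Fin k → ℤ) (d₀ : ℤ) (p : HPt k n) (q : HPt k n') : Prop :=
  (∀ j, (q.1 j : ℤ) = p.1 j + d j) ∧ (q.2 : ℤ) = p.2 + d₀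

section IsTranslate

variable {d e : Fin k → ℤ} {d₀ e₀ : ℤ}

theorem IsTranslate.unique {p : HPt k n} {q q' : HPt k n'} (h : IsTranslate d d₀ p q)
    (h' : IsTranslate d d₀ p q') : q = q' := by
  refine Prod.ext (funext fun j => ?_) (Fin.ext ?_)
  · have := h.1 j
    have := h'.1 j
    omega
  · have := h.2
    have := h'.2
    omega

theorem isTranslate_neg_iff {p : HPt k n} {q : HPt k n'} :
    IsTranslate (-d) (-d₀) q p ↔ IsTranslate d d₀ p q := by
  simp only [IsTranslate, Pi.neg_apply]
  constructor <;> rintro ⟨h, h₀⟩ <;> exact ⟨fun j => by linarith [h j], by linarith⟩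

theorem IsTranslate.trans {p : HPt k n} {q : HPt k n'} {r : HPt k n''}
    (h : IsTranslate d d₀ p q) (h' : IsTranslate e e₀ q r) :
    IsTranslate (d + e) (d₀ + e₀) p r :=
  ⟨fun j => by simp only [Pi.add_apply]; linarith [h.1 j, h'.1 j], by linarith [h.2, h'.2]⟩

theorem IsTranslationOn.comp {f : HPt k n → HPt k n'} {g : HPt k n' → HPt k n''}
    {X : Set (HPt k n)} {Y : Set (HPt k n')} (hf : IsTranslationOn k n n' f X)
    (hg : IsTranslationOn k n' n'' g Y) : IsTranslationOn k n n'' (g ∘ f) (X ∩ f ⁻¹' Y) := by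
  obtain ⟨d, d₀, hd⟩ := hf
  obtain ⟨e, e₀, he⟩ := hg
  exact ⟨d + e, d₀ + e₀, fun p hp => IsTranslate.trans (hd p hp.1) (he (f p) hp.2)⟩

theorem IsTranslationOn.symm_image (f : HPt k n ≃ HPt k n') {X : Set (HPt k n)}
    (hf : IsTranslationOn k n n' f X) : IsTranslationOn k n' n f.symm (f '' X) := by
  obtain ⟨d, d₀, hd⟩ := hf
  refine ⟨-d, -d₀, ?_⟩
  rintro _ ⟨p, hp, rfl⟩
  rw [f.symm_apply_apply]
  exact isTranslate_neg_iff.2 (hd p hp)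

def translatePreimage (d : Fin k → ℤ) (d₀ : ℤ) (Y : Set (HPt k n')) : Set (HPt k n) :=
  {p | ∃ q ∈ Y, IsTranslate d d₀ p q}

theorem inter_preimage_eq_inter_translatePreimage {f : HPt k n → HPt k n'}
    {X : Set (HPt k n)} (Y : Set (HPt k n')) (hf : ∀ p ∈ X, IsTranslate d d₀ p (f p)) :
    X ∩ f ⁻¹' Y = X ∩ translatePreimage d d₀ Y := by
  ext p
  constructor
  · rintro ⟨hp, hfp⟩
    exact ⟨hp, f p, hfp, hf p hp⟩
  · rintro ⟨hp, q, hq, hpq⟩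
    exact ⟨hp, by rwa [mem_preimage, (hf p hp).unique hpq]⟩

theorem image_eq_translatePreimage_neg {f : HPt k n → HPt k n'} {X : Set (HPt k n)}
    (hf : ∀ p ∈ X, IsTranslate d d₀ p (f p)) : f '' X = translatePreimage (-d) (-d₀) X := by
  ext q
  constructor
  · rintro ⟨p, hp, rfl⟩
    exact ⟨p, hp, isTranslate_neg_iff.2 (hf p hp)⟩
  · rintro ⟨p, hp, hqp⟩
    exact ⟨p, hp, (hf p hp).unique (isTranslate_neg_iff.1 hqp)⟩

end IsTranslate

def IsRayFactor (s : Set ℕ) : Prop := (∃ a, s = Ici a) ∨ ∃ a, s = {a}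

theorem IsRayFactor.inter {s t : Set ℕ} (hs : IsRayFactor s) (ht : IsRayFactor t)
    (hst : (s ∩ t).Nonempty) : IsRayFactor (s ∩ t) := by
  rcases ht with ⟨b, rfl⟩ | ⟨b, rfl⟩
  · rcases hs with ⟨a, rfl⟩ | ⟨a, rfl⟩
    · exact Or.inl ⟨a ⊔ b, Ici_inter_Ici⟩
    · exact Or.inr ⟨a, hst.subset_singleton_iff.1 inter_subset_left⟩
  · exact Or.inr ⟨b, hst.subset_singleton_iff.1 inter_subset_right⟩

theorem IsRayFactor.shift_preimage {t : Set ℕ} (ht : IsRayFactor t) (e : ℤ)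
    (hne : {m : ℕ | ∃ m' ∈ t, (m' : ℤ) = m + e}.Nonempty) :
    IsRayFactor {m : ℕ | ∃ m' ∈ t, (m' : ℤ) = m + e} := by
  rcases ht with ⟨a, rfl⟩ | ⟨a, rfl⟩
  · refine Or.inl ⟨(a - e).toNat, ext fun m => ⟨?_, fun hm => ⟨(m + e).toNat, ?_, ?_⟩⟩⟩
    · rintro ⟨m', hm', h⟩
      simp only [mem_Ici] at hm' ⊢
      omega
    · simp only [mem_Ici] at hm ⊢
      omega
    · simp only [mem_Ici] at hm
      omega
  · obtain ⟨m₀, _, rfl, h₀⟩ := hne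
    refine Or.inr ⟨m₀, ext fun m => ?_⟩
    simp only [mem_ofPred_eq, mem_singleton_iff, exists_eq_left]
    omega

theorem isRay_iff_pi {X : Set (Fin k → ℕ)} :
    IsRay k X ↔ ∃ S : Fin k → Set ℕ, (∀ j, IsRayFactor (S j)) ∧ X = univ.pi S := by
  classical
  constructor
  · rintro ⟨_, x, T, -, rfl⟩
    refine ⟨fun j => if j ∈ T then Ici (x j) else {x j}, fun j => ?_, ?_⟩
    · dsimp only
      split_ifs
      exacts [Or.inl ⟨x j, rfl⟩, Or.inr ⟨x j, rfl⟩]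
    · ext y
      simp only [mem_ofPred_eq, mem_pi, mem_univ, true_implies]
      refine forall_congr' fun j => ?_
      split_ifs with hj <;> simp [hj]
  · rintro ⟨S, hS, rfl⟩
    have hS' : ∀ j, ∃ a, S j = Ici a ∨ S j = {a} := fun j => by
      rcases hS j with ⟨a, ha⟩ | ⟨a, ha⟩
      exacts [⟨a, Or.inl ha⟩, ⟨a, Or.inr ha⟩]
    choose x hx using hS'
    refine ⟨_, x, Finset.univ.filter fun j => S j = Ici (x j), rfl, ?_⟩
    ext y
    simp only [mem_ofPred_eq, mem_pi, mem_univ, true_implies, Finset.mem_filter,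
      Finset.mem_univ, true_and]
    refine forall_congr' fun j => ?_
    by_cases hj : S j = Ici (x j)
    · simp [hj]
    · have hpt := (hx j).resolve_left hj
      rw [hpt] at hj ⊢
      simp [hj]

theorem IsRay.nonempty {X : Set (Fin k → ℕ)} (hX : IsRay k X) : X.Nonempty := by
  obtain ⟨_, x, T, -, rfl⟩ := hX
  exact ⟨x, fun j => ⟨fun _ => le_rfl, fun _ => rfl⟩⟩

theorem IsRay.inter {X Y : Set (Fin k → ℕ)} (hX : IsRay k X) (hY : IsRay k Y)
    (hne : (X ∩ Y).Nonempty) : IsRay k (X ∩ Y) := by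
  obtain ⟨S, hS, rfl⟩ := isRay_iff_pi.1 hX
  obtain ⟨S', hS', rfl⟩ := isRay_iff_pi.1 hY
  rw [← pi_inter_distrib] at hne ⊢
  exact isRay_iff_pi.2 ⟨_, fun j => (hS j).inter (hS' j) (univ_pi_nonempty_iff.1 hne j), rfl⟩

def shiftPreimage (d : Fin k → ℤ) (Y : Set (Fin k → ℕ)) : Set (Fin k → ℕ) :=
  {y | ∃ y' ∈ Y, ∀ j, (y' j : ℤ) = y j + d j}

theorem shiftPreimage_pi (d : Fin k → ℤ) (S : Fin k → Set ℕ) :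
    shiftPreimage d (univ.pi S) = univ.pi fun j => {m : ℕ | ∃ m' ∈ S j, (m' : ℤ) = m + d j} := by
  ext y
  simp only [shiftPreimage, mem_pi, mem_univ, true_implies, mem_ofPred_eq]
  constructor
  · rintro ⟨y', hy', h⟩ j
    exact ⟨y' j, hy' j, h j⟩
  · intro h
    choose y' hy' h' using h
    exact ⟨y', hy', h'⟩

theorem isRay_shiftPreimage {Y : Set (Fin k → ℕ)} (hY : IsRay k Y) (d : Fin k → ℤ)
    (hne : (shiftPreimage d Y).Nonempty) : IsRay k (shiftPreimage d Y) := by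
  obtain ⟨S, hS, rfl⟩ := isRay_iff_pi.1 hY
  rw [shiftPreimage_pi] at hne ⊢
  exact isRay_iff_pi.2 ⟨_, fun j => (hS j).shift_preimage _ (univ_pi_nonempty_iff.1 hne j), rfl⟩

theorem IsRayIn.nonempty {X : Set (HPt k n)} (hX : IsRayIn k n X) : X.Nonempty := by
  obtain ⟨Y, i, hY, rfl⟩ := hX
  obtain ⟨y, hy⟩ := hY.nonempty
  exact ⟨(y, i), hy, rfl⟩

theorem IsRayIn.inter {X Y : Set (HPt k n)} (hX : IsRayIn k n X) (hY : IsRayIn k n Y)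
    (hne : (X ∩ Y).Nonempty) : IsRayIn k n (X ∩ Y) := by
  obtain ⟨X, i, hX, rfl⟩ := hX
  obtain ⟨Y, i', hY, rfl⟩ := hY
  obtain ⟨p, ⟨hpX, rfl⟩, hpY, hi'⟩ := hne
  refine ⟨X ∩ Y, p.2, hX.inter hY ⟨p.1, hpX, hpY⟩, ?_⟩
  ext q
  simp only [mem_inter_iff, mem_ofPred_eq, hi']
  tauto

theorem isRayIn_translatePreimage {Y : Set (HPt k n')} (hY : IsRayIn k n' Y)
    {d : Fin k → ℤ} {d₀ : ℤ} (hne : (translatePreimage d d₀ Y : Set (HPt k n)).Nonempty) :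
    IsRayIn k n (translatePreimage d d₀ Y) := by
  obtain ⟨Y, i, hY, rfl⟩ := hY
  obtain ⟨p₀, q₀, ⟨hq₀, rfl⟩, hpq₀⟩ := hne
  refine ⟨shiftPreimage d Y, p₀.2, isRay_shiftPreimage hY d ⟨p₀.1, q₀.1, hq₀, hpq₀.1⟩, ?_⟩
  ext p
  constructor
  · rintro ⟨q, ⟨hq, hqi⟩, hpq⟩
    refine ⟨⟨q.1, hq, hpq.1⟩, Fin.ext ?_⟩
    have := hpq.2
    have := hpq₀.2
    rw [hqi] at *
    omega
  · rintro ⟨⟨y', hy', hy⟩, hp⟩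
    refine ⟨(y', q₀.2), ⟨hy', rfl⟩, hy, ?_⟩
    rw [hp]
    exact hpq₀.2

theorem isRayIn_level (i : Fin n) : IsRayIn k n {p | p.2 = i} :=
  ⟨univ, i, ⟨k, 0, Finset.univ, Finset.card_fin k, by ext; simp⟩, by ext; simp⟩

theorem IsRayPartitionOf.image {P : Set (Set (HPt k n))} {A : Set (HPt k n)}
    {f : HPt k n → HPt k n'} (hf : Function.Injective f) (hP : IsRayPartitionOf k n P A)
    (hray : ∀ X ∈ P, IsRayIn k n' (f '' X)) :
    IsRayPartitionOf k n' (image f '' P) (f '' A) := by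
  obtain ⟨hfin, -, rfl, hdisj⟩ := hP
  refine ⟨hfin.image _, forall_mem_image.2 hray, image_sUnion.symm, ?_⟩
  rintro _ ⟨X, hX, rfl⟩ _ ⟨X', hX', rfl⟩ hne
  exact (disjoint_image_iff hf).2 (hdisj X hX X' hX' (ne_of_apply_ne _ hne))

theorem IsRayPartitionOf.inter_preimage {Q : Set (Set (HPt k n))} {P : Set (Set (HPt k n'))}
    {A : Set (HPt k n)} {B : Set (HPt k n')} (f : HPt k n → HPt k n')
    (hQ : IsRayPartitionOf k n Q A) (hP : IsRayPartitionOf k n' P B)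
    (hray : ∀ X ∈ Q, ∀ Y ∈ P, (X ∩ f ⁻¹' Y).Nonempty → IsRayIn k n (X ∩ f ⁻¹' Y)) :
    IsRayPartitionOf k n {Z ∈ image2 (fun X Y => X ∩ f ⁻¹' Y) Q P | Z.Nonempty}
      (A ∩ f ⁻¹' B) := by
  obtain ⟨hQfin, -, rfl, hQdisj⟩ := hQ
  obtain ⟨hPfin, -, rfl, hPdisj⟩ := hP
  refine ⟨(hQfin.image2 _ hPfin).subset (sep_subset _ _), ?_, ?_, ?_⟩
  · rintro _ ⟨⟨X, hX, Y, hY, rfl⟩, hne⟩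
    exact hray X hX Y hY hne
  · ext p
    simp only [mem_sUnion, mem_image2, mem_inter_iff, mem_preimage]
    constructor
    · rintro ⟨_, ⟨⟨X, hX, Y, hY, rfl⟩, -⟩, hpX, hpY⟩
      exact ⟨⟨X, hX, hpX⟩, Y, hY, hpY⟩
    · rintro ⟨⟨X, hX, hpX⟩, Y, hY, hpY⟩
      exact ⟨_, ⟨⟨X, hX, Y, hY, rfl⟩, p, hpX, hpY⟩, hpX, hpY⟩
  · rintro _ ⟨⟨X, hX, Y, hY, rfl⟩, -⟩ _ ⟨⟨X', hX', Y', hY', rfl⟩, -⟩ hne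
    refine disjoint_left.2 fun p ⟨hpX, hpY⟩ ⟨hpX', hpY'⟩ => hne ?_
    rw [PairwiseDisjoint.elim_set hQdisj hX hX' p hpX hpX',
      PairwiseDisjoint.elim_set hPdisj hY hY' (f p) hpY hpY']

theorem isPiecewiseTranslation_id : IsPiecewiseTranslation k n id := by
  refine ⟨range fun i : Fin n => {p : HPt k n | p.2 = i},
    ⟨finite_range _, forall_mem_range.2 isRayIn_level, ?_, ?_⟩,
    forall_mem_range.2 fun i => ⟨0, 0, fun p _ => by simp⟩⟩
  · exact sUnion_range _ ▸ iUnion_eq_univ_iff.2 fun p => ⟨p.2, rfl⟩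
  · rintro _ ⟨i, rfl⟩ _ ⟨i', rfl⟩ hne
    exact disjoint_left.2 fun p hp hp' => hne (by rw [hp.symm.trans hp'])

theorem IsPiecewiseTranslation.comp {f g : HPt k n → HPt k n}
    (hg : IsPiecewiseTranslation k n g) (hf : IsPiecewiseTranslation k n f) :
    IsPiecewiseTranslation k n (g ∘ f) := by
  obtain ⟨P, hP, hgP⟩ := hg
  obtain ⟨Q, hQ, hfQ⟩ := hf
  have hray : ∀ X ∈ Q, ∀ Y ∈ P, (X ∩ f ⁻¹' Y).Nonempty → IsRayIn k n (X ∩ f ⁻¹' Y) := by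
    intro X hX Y hY hne
    obtain ⟨d, d₀, hd⟩ := hfQ X hX
    rw [inter_preimage_eq_inter_translatePreimage Y hd] at hne ⊢
    exact (hQ.2.1 X hX).inter
      (isRayIn_translatePreimage (hP.2.1 Y hY) (hne.mono inter_subset_right)) hne
  have hR := hQ.inter_preimage f hP hray
  rw [preimage_univ, inter_univ] at hR
  refine ⟨_, hR, ?_⟩
  rintro _ ⟨⟨X, hX, Y, hY, rfl⟩, -⟩
  exact (hfQ X hX).comp (hgP Y hY)

theorem IsPiecewiseTranslation.symm {e : HPt k n ≃ HPt k n}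
    (he : IsPiecewiseTranslation k n e) : IsPiecewiseTranslation k n e.symm := by
  obtain ⟨P, hP, heP⟩ := he
  have hray : ∀ X ∈ P, IsRayIn k n (e '' X) := by
    intro X hX
    obtain ⟨d, d₀, hd⟩ := heP X hX
    have hne : (e '' X).Nonempty := (hP.2.1 X hX).nonempty.image e
    rw [image_eq_translatePreimage_neg hd] at hne ⊢
    exact isRayIn_translatePreimage (hP.2.1 X hX) hne
  have hR := hP.image e.injective hray
  rw [image_univ_of_surjective e.surjective] at hR
  exact ⟨_, hR, forall_mem_image.2 fun X hX => (heP X hX).symm_image e⟩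

theorem piecewiseTranslations_form_subgroup_general (k n : ℕ) :
    IsPiecewiseTranslation k n ⇑(1 : Equiv.Perm (HPt k n)) ∧
    (∀ g h : Equiv.Perm (HPt k n), IsPiecewiseTranslation k n ⇑g →
      IsPiecewiseTranslation k n ⇑h → IsPiecewiseTranslation k n ⇑(g * h)) ∧
    (∀ g : Equiv.Perm (HPt k n), IsPiecewiseTranslation k n ⇑g →
      IsPiecewiseTranslation k n ⇑g⁻¹) :=
  ⟨isPiecewiseTranslation_id, fun _ _ hg hh => hg.comp hh, fun _ hg => hg.symm⟩

/-- The set of permutations of `ℕ^k × [n]` that are translations on each ray of some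
finite partition into rays contains the identity and is closed under composition and
inversion, hence forms a subgroup of the symmetric group of `ℕ^k × [n]`. -/
theorem piecewiseTranslations_form_subgroup (k n : ℕ) (hk : 1 ≤ k) :
    IsPiecewiseTranslation k n ⇑(1 : Equiv.Perm (HPt k n)) ∧
    (∀ g h : Equiv.Perm (HPt k n), IsPiecewiseTranslation k n ⇑g →
      IsPiecewiseTranslation k n ⇑h → IsPiecewiseTranslation k n ⇑(g * h)) ∧
    (∀ g : Equiv.Perm (HPt k n), IsPiecewiseTranslation k n ⇑g →
      IsPiecewiseTranslation k n ⇑g⁻¹) :=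
  piecewiseTranslations_form_subgroup_general k n
end

section
/- Every finite partition P of ℕ^k × [n] into rays contains exactly n rays of dimension k; more precisely, for each i ∈ [n] there is exactly one k-dimensional ray of P contained in ℕ^k × {i}, and every k-dimensional ray of P is contained in ℕ^k × {i} for some i. -/
open CategoryTheory

/-!
In the slice `ℕ^k × {i}` the diagonal points `(m, …, m, i)` are infinitely many, so two of them
lie in the same ray of the finite partition; as they differ in every coordinate, that ray is free
in every coordinate, i.e. it is `k`-dimensional. Two `k`-dimensional rays `[x, ∞) × {i}` and
`[x', ∞) × {i}` of the same slice share the point `(x ⊔ x', i)`, so disjointness makes that ray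
unique. Each ray lies in exactly one slice, which turns these facts into the count.
-/

theorem Set.ncard_eq_card_of_existsUnique {α ι : Type*} {S : Set α} (R : α → ι → Prop)
    (hι : ∀ i, ∃! X, X ∈ S ∧ R X i) (hS : ∀ X ∈ S, ∃! i, R X i) : S.ncard = Nat.card ι := by
  rw [← Nat.card_coe_set_eq]
  choose f hf hf_unique using fun X : S => hS X X.2
  refine Nat.card_eq_of_bijective f ⟨fun X Y hXY => ?_, fun i => ?_⟩
  · obtain ⟨Z, -, hZ⟩ := hι (f X)
    exact Subtype.ext ((hZ X ⟨X.2, hf X⟩).trans (hZ Y ⟨Y.2, hXY ▸ hf Y⟩).symm)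
  · obtain ⟨X, ⟨hXS, hXi⟩, -⟩ := hι i
    exact ⟨⟨X, hXS⟩, (hf_unique ⟨X, hXS⟩ i hXi).symm⟩

namespace IsRayOfDim

variable {k r : ℕ} {Y : Set (Fin k → ℕ)}

theorem nonempty (h : IsRayOfDim k r Y) : Y.Nonempty := by
  obtain ⟨x, T, -, rfl⟩ := h
  exact ⟨x, fun j => ⟨fun _ => le_rfl, fun _ => rfl⟩⟩

theorem exists_eq_Ici (h : IsRayOfDim k k Y) : ∃ x, Y = Set.Ici x := by
  obtain ⟨x, T, hT, rfl⟩ := h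
  obtain rfl : T = Finset.univ := Finset.eq_univ_of_card T (by rw [hT, Fintype.card_fin])
  exact ⟨x, by ext y; simp [Pi.le_def]⟩

theorem eq_of_forall_ne (h : IsRayOfDim k r Y) {y y' : Fin k → ℕ} (hy : y ∈ Y) (hy' : y' ∈ Y)
    (hne : ∀ j, y j ≠ y' j) : r = k := by
  obtain ⟨x, T, rfl, rfl⟩ := h
  have hT : T = Finset.univ := Finset.eq_univ_of_forall fun j => by
    by_contra hj
    exact hne j (((hy j).2 hj).trans ((hy' j).2 hj).symm)
  rw [hT, Finset.card_univ, Fintype.card_fin]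

end IsRayOfDim

section Rays

variable {k n r : ℕ} {X : Set (HPt k n)}

theorem IsRayInOfDim.isRayIn (h : IsRayInOfDim k n r X) : IsRayIn k n X :=
  let ⟨Y, i, hY, hX⟩ := h
  ⟨Y, i, ⟨r, hY⟩, hX⟩

theorem IsRayIn.subset_slice_of_mem (h : IsRayIn k n X) {p : HPt k n} (hp : p ∈ X) :
    X ⊆ {q : HPt k n | q.2 = p.2} := by
  obtain ⟨Y, i, -, rfl⟩ := h
  exact fun q hq => hq.2.trans hp.2.symm

theorem IsRayIn.existsUnique_subset_slice (h : IsRayIn k n X) :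
    ∃! i : Fin n, X ⊆ {p : HPt k n | p.2 = i} := by
  obtain ⟨p, hp⟩ : X.Nonempty := by
    obtain ⟨Y, i, ⟨r, hY⟩, rfl⟩ := h
    obtain ⟨y, hy⟩ := hY.nonempty
    exact ⟨(y, i), hy, rfl⟩
  exact ⟨p.2, h.subset_slice_of_mem hp, fun i hi => (hi hp).symm⟩

theorem IsRayIn.isRayInOfDim_of_forall_ne (h : IsRayIn k n X) {p q : HPt k n} (hp : p ∈ X)
    (hq : q ∈ X) (hne : ∀ j, p.1 j ≠ q.1 j) : IsRayInOfDim k n k X := by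
  obtain ⟨Y, i, ⟨r, hY⟩, rfl⟩ := h
  obtain rfl := hY.eq_of_forall_ne hp.1 hq.1 hne
  exact ⟨Y, i, hY, rfl⟩

theorem IsRayInOfDim.inter_nonempty {X' : Set (HPt k n)} {i : Fin n}
    (h : IsRayInOfDim k n k X) (h' : IsRayInOfDim k n k X')
    (hX : X ⊆ {p : HPt k n | p.2 = i}) (hX' : X' ⊆ {p : HPt k n | p.2 = i}) :
    (X ∩ X').Nonempty := by
  obtain ⟨Y, j, hY, rfl⟩ := h
  obtain ⟨Y', j', hY', rfl⟩ := h'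
  obtain ⟨x, rfl⟩ := hY.exists_eq_Ici
  obtain ⟨x', rfl⟩ := hY'.exists_eq_Ici
  obtain rfl : j = i := hX (show (x, j) ∈ _ from ⟨Set.self_mem_Ici, rfl⟩)
  obtain rfl : j' = j := hX' (show (x', j') ∈ _ from ⟨Set.self_mem_Ici, rfl⟩)
  exact ⟨(x ⊔ x', j'), ⟨Set.mem_Ici.2 le_sup_left, rfl⟩, ⟨Set.mem_Ici.2 le_sup_right, rfl⟩⟩

end Rays

namespace IsRayPartitionOf

variable {k n : ℕ} {P : Set (Set (HPt k n))} {A : Set (HPt k n)}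

theorem isRayIn (hP : IsRayPartitionOf k n P A) {X : Set (HPt k n)} (hX : X ∈ P) :
    IsRayIn k n X :=
  hP.2.1 X hX

theorem eq_of_inter_nonempty (hP : IsRayPartitionOf k n P A) {X X' : Set (HPt k n)}
    (hX : X ∈ P) (hX' : X' ∈ P) (h : (X ∩ X').Nonempty) : X = X' := by
  by_contra hne
  exact Set.not_disjoint_iff_nonempty_inter.2 h (hP.2.2.2 X hX X' hX' hne)

theorem exists_mem_of_mem (hP : IsRayPartitionOf k n P A) {p : HPt k n} (hp : p ∈ A) :
    ∃ X ∈ P, p ∈ X := by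
  rw [← hP.2.2.1] at hp
  exact hp

theorem exists_ne_mem_of_infinite {β : Type*} [Infinite β] (hP : IsRayPartitionOf k n P A)
    (f : β → HPt k n) (hf : ∀ b, f b ∈ A) : ∃ b b', b ≠ b' ∧ ∃ X ∈ P, f b ∈ X ∧ f b' ∈ X := by
  choose g hgP hg using fun b => hP.exists_mem_of_mem (hf b)
  have := hP.1.to_subtype
  obtain ⟨b, b', hbb', heq⟩ := Finite.exists_ne_map_eq_of_infinite fun b => (⟨g b, hgP b⟩ : P)
  refine ⟨b, b', hbb', g b, hgP b, hg b, ?_⟩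
  rw [show g b = g b' from congrArg Subtype.val heq]
  exact hg b'

theorem existsUnique_top_subset_slice (hP : IsRayPartitionOf k n P Set.univ) (i : Fin n) :
    ∃! X, X ∈ P ∧ IsRayInOfDim k n k X ∧ X ⊆ {p : HPt k n | p.2 = i} := by
  obtain ⟨m, m', hmm', X, hXP, hm, hm'⟩ :=
    hP.exists_ne_mem_of_infinite (fun m : ℕ => ((fun _ => m), i)) fun _ => Set.mem_univ _
  have hX : IsRayInOfDim k n k X :=
    (hP.isRayIn hXP).isRayInOfDim_of_forall_ne hm hm' fun _ => hmm'
  have hXi : X ⊆ {p : HPt k n | p.2 = i} := (hP.isRayIn hXP).subset_slice_of_mem hm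
  exact ⟨X, ⟨hXP, hX, hXi⟩, fun X' ⟨hX'P, hX', hX'i⟩ =>
    hP.eq_of_inter_nonempty hX'P hXP (hX'.inter_nonempty hX hX'i hXi)⟩

end IsRayPartitionOf

theorem rayPartition_top_rays_general (k n : ℕ) (P : Set (Set (HPt k n)))
    (hP : IsRayPartitionOf k n P Set.univ) :
    {X ∈ P | IsRayInOfDim k n k X}.ncard = n ∧
    (∀ i : Fin n, ∃! X, X ∈ P ∧ IsRayInOfDim k n k X ∧ X ⊆ {p : HPt k n | p.2 = i}) ∧
    (∀ X ∈ P, IsRayInOfDim k n k X → ∃ i : Fin n, X ⊆ {p : HPt k n | p.2 = i}) := by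
  refine ⟨?_, hP.existsUnique_top_subset_slice,
    fun X _ hX => hX.isRayIn.existsUnique_subset_slice.exists⟩
  refine (Set.ncard_eq_card_of_existsUnique (fun X i => X ⊆ {p : HPt k n | p.2 = i}) (fun i => ?_)
    fun X hX => hX.2.isRayIn.existsUnique_subset_slice).trans (Nat.card_fin n)
  simpa only [Set.mem_ofPred_eq, and_assoc] using hP.existsUnique_top_subset_slice i

/-- Every finite partition of `ℕ^k × [n]` into rays contains exactly `n` rays of
dimension `k`: for each `i ∈ [n]` exactly one `k`-dimensional ray of the partition is
contained in `ℕ^k × {i}`, and every `k`-dimensional ray of the partition is contained in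
some `ℕ^k × {i}`. -/
theorem rayPartition_top_rays (k n : ℕ) (hk : 1 ≤ k) (P : Set (Set (HPt k n)))
    (hP : IsRayPartitionOf k n P Set.univ) :
    {X ∈ P | IsRayInOfDim k n k X}.ncard = n ∧
    (∀ i : Fin n, ∃! X, X ∈ P ∧ IsRayInOfDim k n k X ∧ X ⊆ {p : HPt k n | p.2 = i}) ∧
    (∀ X ∈ P, IsRayInOfDim k n k X → ∃ i : Fin n, X ⊆ {p : HPt k n | p.2 = i}) :=
  rayPartition_top_rays_general k n P hP
end

section
/- If m ≤ n and f : ℕ^k × [m] → ℕ^k × [n] is a ray-translation injection, then the complement (ℕ^k × [n]) \ f(ℕ^k × [m]) of its image admits a (possibly empty) finite partition into rays. -/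
open CategoryTheory

/-- A ray-translation injection `ℕ^k × [m] → ℕ^k × [n]`: an injection which is a
translation on every ray of some finite partition of `ℕ^k × [m]` into rays. -/
def IsRayTranslationInj (k m n : ℕ) (f : HPt k m → HPt k n) : Prop :=
  Function.Injective f ∧
    ∃ P, IsRayPartitionOf k m P Set.univ ∧ ∀ X ∈ P, IsTranslationOn k m n f X

/-! Together with `∅`, the rays of `ℕ^k × [n]` form a semiring of sets: two rays meet in a ray or
not at all, and the complement of a ray is the disjoint union of finitely many rays, obtained by
sorting its points according to the first coordinate at which they leave the ray. Hence finite
unions of rays form a ring of sets, each member of which is a finite disjoint union of rays.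
A translation maps a ray onto a ray, so the image of `f` is a finite union of rays; so is
`ℕ^k × [n]`, and therefore so is the complement of the image. -/

open Set MeasureTheory

theorem Set.PairwiseDisjoint.image_id {ι α : Type*} {S : Set ι} {g : ι → Set α}
    (h : S.PairwiseDisjoint g) : (g '' S).PairwiseDisjoint id := by
  rintro _ ⟨a, ha, rfl⟩ _ ⟨b, hb, rfl⟩ hne
  exact h ha hb (ne_of_apply_ne g hne)

namespace MeasureTheory

variable {α β : Type*}

theorem IsSetSemiring.of_compl {C : Set (Set α)} (empty_mem : ∅ ∈ C)
    (inter_mem : ∀ s ∈ C, ∀ t ∈ C, s ∩ t ∈ C)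
    (compl_eq_sUnion : ∀ t ∈ C, ∃ I : Finset (Set α),
      ↑I ⊆ C ∧ (I : Set (Set α)).PairwiseDisjoint id ∧ tᶜ = ⋃₀ ↑I) :
    IsSetSemiring C where
  empty_mem := empty_mem
  inter_mem := inter_mem
  sdiff_eq_sUnion' s hs t ht := by
    classical
    obtain ⟨I, hIC, hIdisj, htI⟩ := compl_eq_sUnion t ht
    refine ⟨I.image (s ∩ ·), ?_, ?_, ?_⟩
    · rw [Finset.coe_image]
      rintro _ ⟨u, hu, rfl⟩
      exact inter_mem s hs u (hIC hu)
    · rw [Finset.coe_image]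
      exact PairwiseDisjoint.image_id fun a ha b hb hab =>
        (hIdisj ha hb hab).mono inter_subset_right inter_subset_right
    · rw [Finset.coe_image, sUnion_image, sdiff_eq, htI, sUnion_eq_biUnion, inter_iUnion₂]

theorem IsSetSemiring.prod {C : Set (Set α)} {D : Set (Set β)} (hC : IsSetSemiring C)
    (hD : IsSetSemiring D) : IsSetSemiring (image2 (· ×ˢ ·) C D) where
  empty_mem := ⟨∅, hC.empty_mem, ∅, hD.empty_mem, empty_prod⟩
  inter_mem := by
    rintro _ ⟨s, hs, t, ht, rfl⟩ _ ⟨s', hs', t', ht', rfl⟩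
    rw [prod_inter_prod]
    exact mem_image2_of_mem (hC.inter_mem s hs s' hs') (hD.inter_mem t ht t' ht')
  sdiff_eq_sUnion' := by
    classical
    rintro _ ⟨s, hs, t, ht, rfl⟩ _ ⟨s', hs', t', ht', rfl⟩
    obtain ⟨I, hIC, hIdisj, hsI⟩ := hC.sdiff_eq_sUnion' s hs s' hs'
    obtain ⟨J, hJD, hJdisj, htJ⟩ := hD.sdiff_eq_sUnion' t ht t' ht'
    have hsplit : s ×ˢ t \ s' ×ˢ t' = (s \ s') ×ˢ t ∪ (s ∩ s') ×ˢ (t \ t') := by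
      ext ⟨a, b⟩; simp only [mem_sdiff, mem_prod, mem_union, mem_inter_iff]; tauto
    refine ⟨I.image (· ×ˢ t) ∪ J.image ((s ∩ s') ×ˢ ·), ?_, ?_, ?_⟩
    · rw [Finset.coe_union, Finset.coe_image, Finset.coe_image, union_subset_iff]
      constructor
      · rintro _ ⟨a, ha, rfl⟩; exact mem_image2_of_mem (hIC ha) ht
      · rintro _ ⟨b, hb, rfl⟩; exact mem_image2_of_mem (hC.inter_mem s hs s' hs') (hJD hb)
    · rw [Finset.coe_union, Finset.coe_image, Finset.coe_image, pairwiseDisjoint_union]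
      refine ⟨PairwiseDisjoint.image_id fun a ha b hb hab =>
          disjoint_prod.2 (Or.inl (hIdisj ha hb hab)),
        PairwiseDisjoint.image_id fun a ha b hb hab =>
          disjoint_prod.2 (Or.inr (hJdisj ha hb hab)), ?_⟩
      rintro _ ⟨a, ha, rfl⟩ _ ⟨b, hb, rfl⟩ -
      have has : a ⊆ s \ s' := hsI ▸ subset_sUnion_of_mem ha
      exact disjoint_prod.2 (Or.inl (disjoint_sdiff_inter.mono_left has))
    · rw [Finset.coe_union, Finset.coe_image, Finset.coe_image, sUnion_union, sUnion_image,
        sUnion_image, hsplit, hsI, htJ, sUnion_eq_biUnion, sUnion_eq_biUnion,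
        iUnion₂_prod_const, prod_iUnion₂]

theorem isSetSemiring_subsingleton : IsSetSemiring {t : Set β | t.Subsingleton} where
  empty_mem := subsingleton_empty
  inter_mem _ hs _ _ := hs.anti inter_subset_left
  sdiff_eq_sUnion' s hs t _ := ⟨{s \ t}, by simpa using hs.anti sdiff_subset, by simp, by simp⟩

end MeasureTheory

namespace RayPartition

def cell (c : ℕ × Bool) : Set ℕ := if c.2 then Ici c.1 else {c.1}

theorem mem_cell {c : ℕ × Bool} {y : ℕ} : y ∈ cell c ↔ c.1 ≤ y ∧ (c.2 = false → y = c.1) := by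
  unfold cell
  split <;> grind

theorem cell_inter_cell {c c' : ℕ × Bool} (h : (cell c ∩ cell c').Nonempty) :
    cell c ∩ cell c' = cell (max c.1 c'.1, c.2 && c'.2) := by
  obtain ⟨z, hz, hz'⟩ := h
  rw [mem_cell] at hz hz'
  ext y
  rw [mem_inter_iff, mem_cell, mem_cell, mem_cell]
  rcases c with ⟨a, _ | _⟩ <;> rcases c' with ⟨b, _ | _⟩ <;> simp at hz hz' ⊢ <;> omega

def cellCompl (c : ℕ × Bool) : Finset (ℕ × Bool) :=
  (Finset.range c.1).image (·, false) ∪ if c.2 then ∅ else {(c.1 + 1, true)}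

theorem compl_cell (c : ℕ × Bool) : (cell c)ᶜ = ⋃ d ∈ cellCompl c, cell d := by
  ext y
  rcases c with ⟨a, _ | _⟩ <;> simp [cellCompl, mem_cell]
  omega

theorem pairwiseDisjoint_cellCompl (c : ℕ × Bool) :
    (cellCompl c : Set (ℕ × Bool)).PairwiseDisjoint cell := by
  rintro d hd d' hd' hne
  refine Set.disjoint_left.2 fun y hy hy' => hne ?_
  rw [mem_cell] at hy hy'
  rcases c with ⟨a, _ | _⟩ <;> simp [cellCompl] at hd hd' <;> grind

theorem mem_cell_iff_of_shift {a a' y y' : ℕ} {b : Bool} (h : (y' : ℤ) - y = a' - a) :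
    y' ∈ cell (a', b) ↔ y ∈ cell (a, b) := by
  cases b <;> simp [mem_cell] <;> omega

variable {k : ℕ}

def box (c : Fin k → ℕ × Bool) : Set (Fin k → ℕ) := univ.pi fun j => cell (c j)

theorem isRay_iff_exists_box {Y : Set (Fin k → ℕ)} : IsRay k Y ↔ ∃ c, Y = box c := by
  constructor
  · rintro ⟨-, x, T, -, rfl⟩
    refine ⟨fun j => (x j, decide (j ∈ T)), ?_⟩
    ext y
    simp only [box, mem_univ_pi, mem_cell, mem_ofPred_eq, decide_eq_false_iff_not]
    refine forall_congr' fun j => ?_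
    by_cases hj : j ∈ T <;> simp [hj]
    omega
  · rintro ⟨c, rfl⟩
    refine ⟨_, fun j => (c j).1, Finset.univ.filter fun j => (c j).2, rfl, ?_⟩
    ext y
    simp only [box, mem_univ_pi, mem_cell, mem_ofPred_eq, Finset.mem_filter, Finset.mem_univ,
      true_and, Bool.not_eq_true]
    refine forall_congr' fun j => ?_
    cases (c j).2 <;> simp
    omega

theorem box_inter_box {c c' : Fin k → ℕ × Bool} (h : (box c ∩ box c').Nonempty) :
    box c ∩ box c' = box fun j => (max (c j).1 (c' j).1, (c j).2 && (c' j).2) := by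
  obtain ⟨z, hz, hz'⟩ := h
  simp only [box, ← pi_inter_distrib]
  exact pi_congr rfl fun j _ => cell_inter_cell ⟨z j, hz j trivial, hz' j trivial⟩

def exitBox (c : Fin k → ℕ × Bool) (j : Fin k) (d : ℕ × Bool) : Fin k → ℕ × Bool :=
  fun i => if i < j then c i else if i = j then d else (0, true)

theorem mem_box_exitBox {c : Fin k → ℕ × Bool} {j : Fin k} {d : ℕ × Bool} {y : Fin k → ℕ} :
    y ∈ box (exitBox c j d) ↔ (∀ i < j, y i ∈ cell (c i)) ∧ y j ∈ cell d := by
  simp only [box, mem_univ_pi, exitBox]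
  refine ⟨fun h => ⟨fun i hi => by simpa [hi] using h i, by simpa using h j⟩, ?_⟩
  rintro ⟨hlt, hj⟩ i
  split_ifs with hi hij
  · exact hlt i hi
  · exact hij ▸ hj
  · exact mem_cell.2 ⟨Nat.zero_le _, nofun⟩

theorem notMem_cell_of_mem_cellCompl {c d : ℕ × Bool} (hd : d ∈ cellCompl c) {y : ℕ}
    (hy : y ∈ cell d) : y ∉ cell c := by
  rw [← mem_compl_iff, compl_cell]
  exact mem_biUnion (Finset.mem_coe.2 hd) hy

theorem compl_box (c : Fin k → ℕ × Bool) :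
    (box c)ᶜ = ⋃ q ∈ Finset.univ.sigma fun j => cellCompl (c j), box (exitBox c q.1 q.2) := by
  ext y
  simp only [mem_compl_iff, mem_iUnion, Finset.mem_sigma, Finset.mem_univ, true_and,
    mem_box_exitBox, exists_prop, Sigma.exists]
  constructor
  · intro hy
    have : ∃ j, y j ∉ cell (c j) := by simpa [box] using hy
    obtain ⟨j, hj, hmin⟩ := WellFounded.has_min wellFounded_lt {j | y j ∉ cell (c j)} this
    have hj' : y j ∈ ⋃ d ∈ cellCompl (c j), cell d := compl_cell (c j) ▸ hj
    obtain ⟨d, hd, hyd⟩ := mem_iUnion₂.1 hj'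
    exact ⟨j, d, hd, fun i hi => not_not.1 fun h => hmin i h hi, hyd⟩
  · rintro ⟨j, d, hd, -, hyd⟩ hy
    exact notMem_cell_of_mem_cellCompl hd hyd (hy j trivial)

theorem pairwiseDisjoint_exitBox (c : Fin k → ℕ × Bool) :
    (↑(Finset.univ.sigma fun j => cellCompl (c j)) : Set (Σ _ : Fin k, ℕ × Bool)).PairwiseDisjoint
      fun q => box (exitBox c q.1 q.2) := by
  rintro ⟨j, d⟩ hq ⟨j', d'⟩ hq' hne
  simp only [Finset.mem_coe, Finset.mem_sigma, Finset.mem_univ, true_and] at hq hq'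
  refine Set.disjoint_left.2 fun y hy hy' => ?_
  rw [mem_box_exitBox] at hy hy'
  rcases lt_trichotomy j j' with h | rfl | h
  · exact notMem_cell_of_mem_cellCompl hq hy.2 (hy'.1 j h)
  · have hdd : d ≠ d' := fun h => hne (h ▸ rfl)
    exact Set.disjoint_left.1 (pairwiseDisjoint_cellCompl _ hq hq' hdd) hy.2 hy'.2
  · exact notMem_cell_of_mem_cellCompl hq' hy'.2 (hy.1 j' h)

theorem box_const_zero_true : box (fun _ : Fin k => (0, true)) = univ := by
  ext y
  simp [box, mem_cell]

theorem isSetSemiring_boxes : IsSetSemiring (insert ∅ (range (box (k := k)))) := by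
  refine IsSetSemiring.of_compl (mem_insert _ _) ?_ ?_
  · rintro _ (rfl | ⟨c, rfl⟩) _ (rfl | ⟨c', rfl⟩)
    · simp
    · simp
    · simp
    · obtain h | h := (box c ∩ box c').eq_empty_or_nonempty
      · exact h ▸ mem_insert _ _
      · exact mem_insert_of_mem _ ⟨_, (box_inter_box h).symm⟩
  · classical
    rintro _ (rfl | ⟨c, rfl⟩)
    · refine ⟨{box fun _ => (0, true)}, ?_, by simp, by simp [box_const_zero_true]⟩
      simp
    · refine ⟨(Finset.univ.sigma fun j => cellCompl (c j)).image
        fun q => box (exitBox c q.1 q.2), ?_, ?_, ?_⟩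
      · rw [Finset.coe_image]
        rintro _ ⟨q, -, rfl⟩
        exact mem_insert_of_mem _ ⟨_, rfl⟩
      · rw [Finset.coe_image]
        exact (pairwiseDisjoint_exitBox c).image_id
      · rw [Finset.coe_image, sUnion_image, compl_box, Finset.set_biUnion_coe]

variable {n : ℕ}

-- A product with an empty factor is `∅`, so these are the rays of `ℕ^k × [n]` together
-- with `∅`.
def rayFamily (k n : ℕ) : Set (Set (HPt k n)) :=
  image2 (· ×ˢ ·) (insert ∅ (range (box (k := k)))) {t | t.Subsingleton}

theorem isSetSemiring_rayFamily : IsSetSemiring (rayFamily k n) :=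
  isSetSemiring_boxes.prod isSetSemiring_subsingleton

theorem isRayIn_iff {X : Set (HPt k n)} : IsRayIn k n X ↔ ∃ c i, X = box c ×ˢ {i} := by
  constructor
  · rintro ⟨Y, i, hY, rfl⟩
    obtain ⟨c, rfl⟩ := isRay_iff_exists_box.1 hY
    exact ⟨c, i, rfl⟩
  · rintro ⟨c, i, rfl⟩
    exact ⟨box c, i, isRay_iff_exists_box.2 ⟨c, rfl⟩, rfl⟩

theorem mem_rayFamily_of_isRayIn {X : Set (HPt k n)} (h : IsRayIn k n X) : X ∈ rayFamily k n := by
  obtain ⟨c, i, rfl⟩ := isRayIn_iff.1 h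
  exact mem_image2_of_mem (mem_insert_of_mem _ ⟨c, rfl⟩) subsingleton_singleton

theorem isRayIn_of_mem_rayFamily {X : Set (HPt k n)} (hX : X ∈ rayFamily k n) (hne : X ≠ ∅) :
    IsRayIn k n X := by
  obtain ⟨s, hs, t, ht, rfl⟩ := hX
  rcases hs with rfl | ⟨c, rfl⟩
  · exact absurd empty_prod hne
  rcases ht.eq_empty_or_singleton with rfl | ⟨i, rfl⟩
  · exact absurd prod_empty hne
  · exact isRayIn_iff.2 ⟨c, i, rfl⟩

theorem isRayPartitionOf_parts {A : Set (HPt k n)} (Q : Finpartition A)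
    (hQ : ↑Q.parts ⊆ rayFamily k n) : IsRayPartitionOf k n ↑Q.parts A :=
  ⟨Q.parts.finite_toSet, fun _ hX => isRayIn_of_mem_rayFamily (hQ hX) (Q.ne_bot hX),
    by rw [← Finset.sup_id_set_eq_sUnion, Q.sup_parts], fun _ hX _ hY => Q.disjoint hX hY⟩

theorem isRayIn_image {m : ℕ} {f : HPt k m → HPt k n} {X : Set (HPt k m)} (hX : IsRayIn k m X)
    (hf : IsTranslationOn k m n f X) : IsRayIn k n (f '' X) := by
  obtain ⟨c, i, rfl⟩ := isRayIn_iff.1 hX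
  obtain ⟨d, d₀, hd⟩ := hf
  let x₀ : HPt k m := (fun j => (c j).1, i)
  have hx₀ : x₀ ∈ box c ×ˢ {i} := ⟨fun j _ => mem_cell.2 ⟨le_rfl, fun _ => rfl⟩, rfl⟩
  have hx₀1 : ∀ j, ((f x₀).1 j : ℤ) = (c j).1 + d j := (hd x₀ hx₀).1
  have hx₀2 : ((f x₀).2 : ℤ) = i + d₀ := (hd x₀ hx₀).2
  refine isRayIn_iff.2 ⟨fun j => ((f x₀).1 j, (c j).2), (f x₀).2, ?_⟩
  ext q
  constructor
  · rintro ⟨p, hp, rfl⟩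
    obtain ⟨hp1, hp2⟩ := hd p hp
    have hpi : p.2 = i := hp.2
    refine ⟨fun j _ => (mem_cell_iff_of_shift ?_).2 (hp.1 j trivial), Fin.ext ?_⟩
    · have := hx₀1 j; have := hp1 j; omega
    · rw [hpi] at hp2; omega
  · rintro ⟨hq1, hq2 : q.2 = (f x₀).2⟩
    have hle j : (f x₀).1 j ≤ q.1 j := (mem_cell.1 (hq1 j trivial)).1
    obtain ⟨z, hz⟩ : ∃ z : Fin k → ℕ, ∀ j, z j = q.1 j + (c j).1 - (f x₀).1 j := ⟨_, fun _ => rfl⟩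
    have hzi : (z, i) ∈ box c ×ˢ {i} := by
      refine ⟨fun j _ => (mem_cell_iff_of_shift ?_).1 (hq1 j trivial), rfl⟩
      have := hz j; have := hx₀1 j; have := hle j
      dsimp only; omega
    have hz1 : ∀ j, ((f (z, i)).1 j : ℤ) = z j + d j := (hd _ hzi).1
    have hz2 : ((f (z, i)).2 : ℤ) = i + d₀ := (hd _ hzi).2
    refine ⟨(z, i), hzi, Prod.ext (funext fun j => ?_) (Fin.ext ?_)⟩
    · have := hz1 j; have := hz j; have := hx₀1 j; have := hle j; omega
    · rw [hq2]; omega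

theorem univ_mem_supClosure_rayFamily : univ ∈ supClosure (rayFamily k n) := by
  have huniv : (univ : Set (HPt k n)) = ⋃ i ∈ Finset.univ, box (fun _ => (0, true)) ×ˢ {i} := by
    ext p
    simp [box_const_zero_true]
  rw [huniv]
  exact isSetSemiring_rayFamily.isSetRing_supClosure.biUnion_mem _ fun i _ =>
    subset_supClosure (mem_rayFamily_of_isRayIn (isRayIn_iff.2 ⟨_, i, rfl⟩))

theorem range_mem_supClosure_rayFamily {m : ℕ} {f : HPt k m → HPt k n}
    (hf : ∃ P, IsRayPartitionOf k m P univ ∧ ∀ X ∈ P, IsTranslationOn k m n f X) :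
    range f ∈ supClosure (rayFamily k n) := by
  obtain ⟨P, ⟨hPfin, hPray, hPunion, -⟩, htrans⟩ := hf
  rw [← image_univ, ← hPunion, image_sUnion, ← sSup_eq_sUnion]
  refine supClosed_supClosure.sSup_mem (hPfin.image _)
    (subset_supClosure isSetSemiring_rayFamily.empty_mem) ?_
  rintro _ ⟨X, hX, rfl⟩
  exact subset_supClosure (mem_rayFamily_of_isRayIn (isRayIn_image (hPray X hX) (htrans X hX)))

end RayPartition

open RayPartition

theorem complement_partition_general (k m n : ℕ)
    (f : HPt k m → HPt k n) (hf : IsRayTranslationInj k m n f) :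
    ∃ P, IsRayPartitionOf k n P (Set.range f)ᶜ := by
  have hcompl : (range f)ᶜ ∈ supClosure (rayFamily k n) := by
    rw [compl_eq_univ_sdiff]
    exact isSetSemiring_rayFamily.isSetRing_supClosure.sdiff_mem univ_mem_supClosure_rayFamily
      (range_mem_supClosure_rayFamily hf.2)
  obtain ⟨Q, hQ⟩ := isSetSemiring_rayFamily.mem_supClosure_iff.1 hcompl
  exact ⟨_, isRayPartitionOf_parts Q hQ⟩

/-- If `m ≤ n` and `f : ℕ^k × [m] → ℕ^k × [n]` is a ray-translation injection, then the
complement of its image admits a (possibly empty) finite partition into rays. -/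
theorem complement_partition (k m n : ℕ) (hk : 1 ≤ k) (hmn : m ≤ n)
    (f : HPt k m → HPt k n) (hf : IsRayTranslationInj k m n f) :
    ∃ P, IsRayPartitionOf k n P (Set.range f)ᶜ :=
  complement_partition_general k m n f hf
end
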